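/- arXiv:1810.05559 — 3 statements merged into one kernel-verified Lean document; each statement's English description precedes it below -/
import Mathlib

section
/- Let E and F be commutative unitary rings and h : E → F a ring homomorphism such that the induced map from the total ring of fractions Q(E) (localization of E at its set Z(E) of non-zerodivisors) to the localization F_{Z(E)} is an isomorphism. Then the map Hom_E(F, E) → E sending φ to φ(1) is injective. -/
/-! Surjectivity of `Q(E) → F_{Z(E)}` says that every `f : F` becomes an element of `E` after
multiplication by a suitable non-zerodivisor `t` of `E`: `t • f = a • 1`. An `E`-linear
`φ : F → E` then satisfies `t * φ f = a * φ 1`, so `φ 1` determines `φ f` because `t` is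
cancellable in `E`. -/

open nonZeroDivisors

theorem exists_mem_smul_eq_algebraMap_of_surjective_map {E F : Type*} [CommRing E] [CommRing F]
    [Algebra E F] (S : Submonoid E)
    (hsurj : Function.Surjective
      (IsLocalization.map (Localization (S.map (algebraMap E F))) (algebraMap E F)
        (Submonoid.le_comap_map S) : Localization S →+* Localization (S.map (algebraMap E F))))
    (f : F) : ∃ t ∈ S, ∃ a : E, t • f = algebraMap E F a := by
  obtain ⟨y, hy⟩ := hsurj (algebraMap F _ f)
  obtain ⟨⟨a, s⟩, rfl⟩ := IsLocalization.mk'_surjective S y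
  rw [IsLocalization.map_mk', IsLocalization.mk'_eq_iff_eq_mul, ← map_mul,
    IsLocalization.eq_iff_exists (S.map (algebraMap E F))] at hy
  obtain ⟨⟨_, u, hu, rfl⟩, hc⟩ := hy
  refine ⟨u * s, mul_mem hu s.2, u * a, ?_⟩
  simp only at hc
  rw [Algebra.smul_def, map_mul, map_mul, hc]
  ring

theorem LinearMap.ext_of_apply_one {E F : Type*} [CommRing E] [Semiring F] [Algebra E F]
    (h : ∀ f : F, ∃ t ∈ E⁰, ∃ a : E, t • f = algebraMap E F a)
    {φ ψ : F →ₗ[E] E} (h1 : φ 1 = ψ 1) : φ = ψ := by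
  ext f
  obtain ⟨t, ht, a, hf⟩ := h f
  have hφ (χ : F →ₗ[E] E) : t * χ f = a * χ 1 := by
    rw [← smul_eq_mul, ← map_smul, hf, Algebra.algebraMap_eq_smul_one, map_smul, smul_eq_mul]
  rw [← mul_cancel_left_mem_nonZeroDivisors ht, hφ, hφ, h1]

/-- If `E → F` is a ring homomorphism such that the induced map from the total ring of
fractions `Q(E)` (localization at the non-zerodivisors `Z(E)`) to the localization of `F`
at (the image of) `Z(E)` is an isomorphism, then `Hom_E(F, E) → E`, `φ ↦ φ 1`,
is injective. -/
theorem stmt_0 (E F : Type*) [CommRing E] [CommRing F] [Algebra E F]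
    (hbij : Function.Bijective
      (IsLocalization.map
          (Localization (Submonoid.map (algebraMap E F) (nonZeroDivisors E)))
          (algebraMap E F) (Submonoid.le_comap_map (nonZeroDivisors E)) :
        Localization (nonZeroDivisors E) →+*
          Localization (Submonoid.map (algebraMap E F) (nonZeroDivisors E)))) :
    Function.Injective (fun φ : F →ₗ[E] E => φ 1) :=
  fun _ _ h1 =>
    LinearMap.ext_of_apply_one (exists_mem_smul_eq_algebraMap_of_surjective_map E⁰ hbij.2) h1
end

section
/- In the ring E = ℂ[[x,y]]/(xy), the intersection of the ideals generated by the classes of y and of x + y equals the ideal generated by the classes of xy and y², and consequently the colon ideal ((xy, y²) : (y)) in E equals the ideal generated by the classes of x and y. -/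
/-! In `E = R/(xy)` one has `x̄ȳ = 0`; if moreover `x` is a non-zero-divisor modulo `y`, then so is
`x̄` modulo `ȳ`, and if `y` is a non-zero-divisor, the annihilator of `ȳ` is `(x̄)`. These two facts
alone give both identities: an element `(x̄ + ȳ)ḡ` of `(ȳ)` forces `ȳ ∣ ḡ`, whence it lies in
`(ȳ²)`; and `r̄ȳ = c̄ȳ²` forces `r̄ - c̄ȳ ∈ (x̄)`. For `R = ℂ[[x,y]]` both hypotheses are read off
coefficients. -/

namespace Ideal

variable {S : Type*} [CommRing S] {x y : S}

theorem span_mul_sq_eq_span_sq (hxy : x * y = 0) : span {x * y, y ^ 2} = span {y ^ 2} := by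
  rw [hxy, span_insert_zero]

theorem span_inf_span_add_eq_span_sq (hxy : x * y = 0) (hx : ∀ g, y ∣ g * x → y ∣ g) :
    span {y} ⊓ span {x + y} = span {y ^ 2} := by
  refine le_antisymm ?_ ?_
  · rintro z ⟨hzy, hzxy⟩
    obtain ⟨f, rfl⟩ := mem_span_singleton'.1 hzy
    obtain ⟨g, hg⟩ := mem_span_singleton'.1 hzxy
    obtain ⟨c, rfl⟩ : y ∣ g := hx g ⟨f - g, by linear_combination hg⟩
    exact mem_span_singleton'.2 ⟨c, by linear_combination hg - c * hxy⟩
  · rw [span_singleton_le_iff_mem]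
    exact mem_inf.2 ⟨mem_span_singleton'.2 ⟨y, (sq y).symm⟩,
      mem_span_singleton'.2 ⟨y, by linear_combination hxy⟩⟩

theorem colon_span_sq_span_eq_span_pair (hxy : x * y = 0) (hann : ∀ r, r * y = 0 → x ∣ r) :
    (span {y ^ 2}).colon (span {y} : Set S) = span {x, y} := by
  refine le_antisymm (fun r hr => ?_) ?_
  · obtain ⟨c, hc⟩ := mem_span_singleton'.1 (mem_colon_span_singleton.1 hr)
    obtain ⟨d, hd⟩ := hann (r - c * y) (by linear_combination -hc)
    exact mem_span_pair.2 ⟨d, c, by linear_combination -hd⟩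
  · rw [span_le, Set.insert_subset_iff, Set.singleton_subset_iff]
    refine ⟨mem_colon_span_singleton.2 ?_, mem_colon_span_singleton.2 ?_⟩
    · rw [hxy]; exact zero_mem _
    · rw [← sq]; exact mem_span_singleton_self _

namespace Quotient

variable {R : Type*} [CommRing R] {x y : R}

theorem mk_mul_mk_eq_zero : mk (span {x * y}) x * mk (span {x * y}) y = 0 := by
  rw [← map_mul, eq_zero_iff_mem]
  exact mem_span_singleton_self _

theorem mk_dvd_of_dvd_mul_mk (hx : ∀ g, y ∣ g * x → y ∣ g) (a : R ⧸ span {x * y})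
    (h : mk (span {x * y}) y ∣ a * mk (span {x * y}) x) : mk (span {x * y}) y ∣ a := by
  obtain ⟨g, rfl⟩ := mk_surjective a
  obtain ⟨w, hw⟩ := h
  obtain ⟨w, rfl⟩ := mk_surjective w
  rw [← map_mul, ← map_mul, Ideal.Quotient.eq, mem_span_singleton'] at hw
  obtain ⟨k, hk⟩ := hw
  obtain ⟨c, rfl⟩ := hx g ⟨w + x * k, by linear_combination -hk⟩
  exact ⟨mk _ c, map_mul _ _ _⟩

theorem mk_dvd_of_mul_mk_eq_zero (hy : IsRightRegular y) (a : R ⧸ span {x * y})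
    (h : a * mk (span {x * y}) y = 0) : mk (span {x * y}) x ∣ a := by
  obtain ⟨r, rfl⟩ := mk_surjective a
  rw [← map_mul, eq_zero_iff_mem, mem_span_singleton'] at h
  obtain ⟨c, hc⟩ := h
  have hr : r = x * c := hy (by linear_combination -hc)
  exact ⟨mk _ c, by rw [hr, map_mul]⟩

end Quotient

end Ideal

namespace MvPowerSeries

variable {σ R : Type*} [Semiring R]

theorem coeff_add_single_mul_X (s : σ) (m : σ →₀ ℕ) (φ : MvPowerSeries σ R) :
    coeff (m + Finsupp.single s 1) (φ * X s) = coeff m φ := by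
  rw [X_def, coeff_add_mul_monomial, mul_one]

theorem isRightRegular_X (s : σ) : IsRightRegular (X s : MvPowerSeries σ R) := fun φ ψ h => by
  ext m
  have hm := congrArg (coeff (m + Finsupp.single s 1)) h
  rwa [coeff_add_single_mul_X, coeff_add_single_mul_X] at hm

theorem X_dvd_of_X_dvd_mul_X {s t : σ} (hst : s ≠ t) {φ : MvPowerSeries σ R}
    (h : X s ∣ φ * X t) : X s ∣ φ := by
  refine X_dvd_iff.2 fun m hm => ?_
  rw [← coeff_add_single_mul_X t]
  exact X_dvd_iff.1 h _ (by simp [hm, hst])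

end MvPowerSeries

open MvPowerSeries Ideal.Quotient

/-- In `E = ℂ[[x,y]]/(xy)`, the intersection of the ideals `([y])` and `([x+y])` equals
the ideal `([xy],[y²])`; consequently the colon ideal `(([xy],[y²]) : ([y]))` equals
`([x],[y])`. -/
theorem stmt_2 :
    letI q := Ideal.Quotient.mk
      (Ideal.span {(MvPowerSeries.X 0 * MvPowerSeries.X 1 : MvPowerSeries (Fin 2) ℂ)})
    Ideal.span {q (MvPowerSeries.X 1)} ⊓ Ideal.span {q (MvPowerSeries.X 0 + MvPowerSeries.X 1)} =
        Ideal.span {q (MvPowerSeries.X 0 * MvPowerSeries.X 1), q (MvPowerSeries.X 1 ^ 2)} ∧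
      Submodule.colon
          (Ideal.span {q (MvPowerSeries.X 0 * MvPowerSeries.X 1), q (MvPowerSeries.X 1 ^ 2)})
          (Ideal.span {q (MvPowerSeries.X 1)}) =
        Ideal.span {q (MvPowerSeries.X 0), q (MvPowerSeries.X 1)} := by
  have hxy := mk_mul_mk_eq_zero (x := (X 0 : MvPowerSeries (Fin 2) ℂ)) (y := X 1)
  simp only [map_mul, map_add, map_pow]
  rw [Ideal.span_mul_sq_eq_span_sq hxy]
  exact ⟨Ideal.span_inf_span_add_eq_span_sq hxy
      (mk_dvd_of_dvd_mul_mk fun _ => X_dvd_of_X_dvd_mul_X (by decide)),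
    Ideal.colon_span_sq_span_eq_span_pair hxy (mk_dvd_of_mul_mk_eq_zero (isRightRegular_X 1))⟩
end

section
/- The ideal I = (xy, 3y + x²) in ℂ[[x,y]] equals the ideal J of all power series a with a(0,0) = 0 and intersection multiplicity mult₍₀,₀₎(a, 3y + x²) ≥ 3, i.e. the order of a(t, −t²/3) in ℂ[[t]] is at least 3. -/
/-!
The ideal `I = (xy, 3y + x²)` contains `x³ = x(3y + x²) - 3xy` and `3y² = y(3y + x²) - x·xy`,
hence the monomial ideal `(x³, xy, y²)`. Modulo the latter every series is congruent to
`c₀₀ + c₁₀x + c₂₀x² + c₀₁y`, and this remainder lies in `I` exactly when it is a multiple of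
`3y + x²`, i.e. when `c₀₀ = c₁₀ = 0` and `c₀₁ = 3c₂₀`. Since
`a(t, -t²/3) = c₀₀ + c₁₀t + (c₂₀ - c₀₁/3)t² + O(t³)`, these are the stated conditions.
-/

noncomputable section

def px : MvPowerSeries (Fin 2) ℂ := MvPowerSeries.X 0
def py : MvPowerSeries (Fin 2) ℂ := MvPowerSeries.X 1

namespace MvPowerSeries

variable {σ R : Type*} [CommSemiring R]

theorem exists_eq_monomial_mul_add (φ : MvPowerSeries σ R) (e : σ →₀ ℕ) :
    ∃ ψ χ : MvPowerSeries σ R, φ = monomial e 1 * ψ + χ ∧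
      ∀ d, coeff d χ = if e ≤ d then 0 else coeff d φ := by
  classical
  let ψ : MvPowerSeries σ R := fun d => coeff (d + e) φ
  let χ : MvPowerSeries σ R := fun d => if e ≤ d then 0 else coeff d φ
  have hψ (d : σ →₀ ℕ) : coeff d ψ = coeff (d + e) φ := rfl
  have hχ (d : σ →₀ ℕ) : coeff d χ = if e ≤ d then 0 else coeff d φ := rfl
  refine ⟨ψ, χ, ext fun d => ?_, hχ⟩
  rw [map_add, coeff_monomial_mul, one_mul, hψ, hχ]
  split_ifs with hed
  · rw [add_zero, tsub_add_cancel_of_le hed]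
  · rw [zero_add]

theorem mem_span_monomial_of_coeff_eq_zero (E : Finset (σ →₀ ℕ)) {φ : MvPowerSeries σ R}
    (h : ∀ d, (∀ e ∈ E, ¬ e ≤ d) → coeff d φ = 0) :
    φ ∈ Ideal.span ((monomial · (1 : R)) '' E) := by
  classical
  induction E using Finset.induction_on generalizing φ with
  | empty =>
    rw [show φ = 0 from ext fun d => h d (by simp)]
    exact zero_mem _
  | insert e E _ ih =>
    obtain ⟨ψ, χ, rfl, hχ⟩ := φ.exists_eq_monomial_mul_add e
    refine add_mem (Ideal.mul_mem_right _ _ (Ideal.subset_span ⟨e, by simp, rfl⟩)) ?_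
    refine Ideal.span_mono (Set.image_mono (by simp)) (ih fun d hd => ?_)
    rw [hχ]
    split_ifs with hed
    · rfl
    · exact h d (by simpa [hed] using hd)

end MvPowerSeries

open MvPowerSeries Finsupp

def bideg (m j : ℕ) : Fin 2 →₀ ℕ := single 0 m + single 1 j

@[simp] theorem bideg_apply_zero (m j : ℕ) : bideg m j 0 = m := by simp [bideg]

@[simp] theorem bideg_apply_one (m j : ℕ) : bideg m j 1 = j := by simp [bideg]

theorem bideg_apply_eq (d : Fin 2 →₀ ℕ) : bideg (d 0) (d 1) = d := by
  ext i; fin_cases i <;> simp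

theorem bideg_le_iff {m j : ℕ} {d : Fin 2 →₀ ℕ} : bideg m j ≤ d ↔ m ≤ d 0 ∧ j ≤ d 1 := by
  simp [Finsupp.le_def, Fin.forall_fin_two]

@[simp] theorem bideg_inj {m j m' j' : ℕ} : bideg m j = bideg m' j' ↔ m = m' ∧ j = j' := by
  refine ⟨fun h => ⟨?_, ?_⟩, fun h => by rw [h.1, h.2]⟩
  · simpa using congr($h 0)
  · simpa using congr($h 1)

theorem bideg_sub_bideg (m j m' j' : ℕ) : bideg m' j' - bideg m j = bideg (m' - m) (j' - j) := by
  ext i; fin_cases i <;> simp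

theorem bideg_zero_zero : bideg 0 0 = 0 := by simp [bideg]

theorem monomial_bideg_one (m j : ℕ) : monomial (bideg m j) (1 : ℂ) = px ^ m * py ^ j := by
  rw [px, py, X_pow_eq, X_pow_eq, monomial_mul_monomial, one_mul, bideg]

theorem three_mul_py_add_px_sq :
    3 * py + px ^ 2 = monomial (bideg 0 1) (3 : ℂ) + monomial (bideg 2 0) 1 := by
  rw [← mul_one (3 : ℂ), ← zero_add (bideg 0 1), ← monomial_mul_monomial,
    monomial_zero_eq_C_apply, map_ofNat, monomial_bideg_one, monomial_bideg_one]
  ring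

theorem coeff_bideg_mul_monomial_bideg (φ : MvPowerSeries (Fin 2) ℂ) (c : ℂ) (m j m' j' : ℕ) :
    coeff (bideg m' j') (φ * monomial (bideg m j) c) =
      if m ≤ m' ∧ j ≤ j' then coeff (bideg (m' - m) (j' - j)) φ * c else 0 := by
  simp only [coeff_mul_monomial, bideg_le_iff, bideg_apply_zero, bideg_apply_one, bideg_sub_bideg]

/-- The coefficient of `tⁿ` in `a(t, -t²/3)`. -/
def parabolaCoeff (a : MvPowerSeries (Fin 2) ℂ) (n : ℕ) : ℂ :=
  ∑ p ∈ Finset.range (n + 1) ×ˢ Finset.range (n + 1),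
    coeff (bideg p.1 p.2) a * (if p.1 + 2 * p.2 = n then (-(1 : ℂ) / 3) ^ p.2 else 0)

theorem parabolaCoeff_zero (a : MvPowerSeries (Fin 2) ℂ) :
    parabolaCoeff a 0 = coeff (bideg 0 0) a := by
  simp [parabolaCoeff]

theorem parabolaCoeff_one (a : MvPowerSeries (Fin 2) ℂ) :
    parabolaCoeff a 1 = coeff (bideg 1 0) a := by
  simp [parabolaCoeff, Finset.sum_product, Finset.sum_range_succ]

theorem parabolaCoeff_two (a : MvPowerSeries (Fin 2) ℂ) :
    parabolaCoeff a 2 = coeff (bideg 2 0) a - coeff (bideg 0 1) a / 3 := by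
  simp [parabolaCoeff, Finset.sum_product, Finset.sum_range_succ]
  ring

def OrderThreeOnParabola (a : MvPowerSeries (Fin 2) ℂ) : Prop :=
  coeff (bideg 0 0) a = 0 ∧ coeff (bideg 1 0) a = 0 ∧ coeff (bideg 0 1) a = 3 * coeff (bideg 2 0) a

theorem orderThreeOnParabola_iff (a : MvPowerSeries (Fin 2) ℂ) :
    OrderThreeOnParabola a ↔ constantCoeff a = 0 ∧ ∀ n < 3, parabolaCoeff a n = 0 := by
  simp only [OrderThreeOnParabola, ← coeff_zero_eq_constantCoeff_apply, ← bideg_zero_zero,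
    Nat.forall_lt_succ_right, Nat.lt_one_iff, forall_eq, parabolaCoeff_zero, parabolaCoeff_one,
    parabolaCoeff_two, sub_eq_zero]
  constructor
  · rintro ⟨h₀₀, h₁₀, h₀₁⟩
    exact ⟨h₀₀, ⟨h₀₀, h₁₀⟩, by rw [h₀₁]; ring⟩
  · rintro ⟨h₀₀, ⟨-, h₁₀⟩, h₂₀⟩
    exact ⟨h₀₀, h₁₀, by rw [h₂₀]; ring⟩

theorem orderThreeOnParabola_of_mem {a : MvPowerSeries (Fin 2) ℂ}
    (ha : a ∈ Ideal.span {px * py, 3 * py + px ^ 2}) : OrderThreeOnParabola a := by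
  obtain ⟨u, v, rfl⟩ := Ideal.mem_span_pair.1 ha
  rw [three_mul_py_add_px_sq, show px * py = monomial (bideg 1 1) 1 by simp [monomial_bideg_one]]
  simp [OrderThreeOnParabola, mul_add, coeff_bideg_mul_monomial_bideg, mul_comm]

theorem mem_span_x_cube_xy_y_sq_of_coeff_eq_zero {b : MvPowerSeries (Fin 2) ℂ}
    (h₀₀ : coeff (bideg 0 0) b = 0) (h₁₀ : coeff (bideg 1 0) b = 0)
    (h₂₀ : coeff (bideg 2 0) b = 0) (h₀₁ : coeff (bideg 0 1) b = 0) :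
    b ∈ Ideal.span {px ^ 3, px * py, py ^ 2} := by
  have hmem := mem_span_monomial_of_coeff_eq_zero {bideg 3 0, bideg 1 1, bideg 0 2} (φ := b) ?_
  · simpa [Set.image_insert_eq, monomial_bideg_one] using hmem
  intro d hd
  simp only [Finset.mem_insert, Finset.mem_singleton, forall_eq_or_imp, forall_eq,
    bideg_le_iff] at hd
  rw [← bideg_apply_eq d]
  obtain ⟨h0, h1⟩ | ⟨h0, h1⟩ | ⟨h0, h1⟩ | ⟨h0, h1⟩ :
      (d 0 = 0 ∧ d 1 = 0) ∨ (d 0 = 1 ∧ d 1 = 0) ∨ (d 0 = 2 ∧ d 1 = 0) ∨ (d 0 = 0 ∧ d 1 = 1) := by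
    omega
  all_goals rw [h0, h1]; assumption

theorem span_x_cube_xy_y_sq_le :
    Ideal.span {px ^ 3, px * py, py ^ 2} ≤ Ideal.span {px * py, 3 * py + px ^ 2} := by
  have hxy : px * py ∈ Ideal.span {px * py, 3 * py + px ^ 2} := Ideal.subset_span (by simp)
  have hg : 3 * py + px ^ 2 ∈ Ideal.span {px * py, 3 * py + px ^ 2} := Ideal.subset_span (by simp)
  rw [Ideal.span_le]
  rintro _ (rfl | rfl | rfl)
  · rw [show px ^ 3 = px * (3 * py + px ^ 2) - 3 * (px * py) by ring]
    exact sub_mem (Ideal.mul_mem_left _ _ hg) (Ideal.mul_mem_left _ _ hxy)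
  · exact hxy
  · have h : (3 : ℂ) • py ^ 2 = py * (3 * py + px ^ 2) - px * (px * py) := by
      rw [Algebra.smul_def, map_ofNat]
      ring
    have := Submodule.smul_of_tower_mem _ (3 : ℂ)⁻¹
      (h ▸ sub_mem (Ideal.mul_mem_left _ _ hg) (Ideal.mul_mem_left _ _ hxy))
    rwa [smul_smul, inv_mul_cancel₀ three_ne_zero, one_smul] at this

theorem mem_of_orderThreeOnParabola {a : MvPowerSeries (Fin 2) ℂ} (ha : OrderThreeOnParabola a) :
    a ∈ Ideal.span {px * py, 3 * py + px ^ 2} := by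
  obtain ⟨h₀₀, h₁₀, h₀₁⟩ := ha
  set c := coeff (bideg 2 0) a
  have hb : a - C c * (3 * py + px ^ 2) ∈ Ideal.span {px * py, 3 * py + px ^ 2} := by
    apply span_x_cube_xy_y_sq_le
    rw [three_mul_py_add_px_sq]
    apply mem_span_x_cube_xy_y_sq_of_coeff_eq_zero <;>
      simp [coeff_monomial, h₀₀, h₁₀, h₀₁, c, mul_comm]
  have hg : 3 * py + px ^ 2 ∈ Ideal.span {px * py, 3 * py + px ^ 2} :=
    Ideal.subset_span (Set.mem_insert_of_mem _ rfl)
  simpa using add_mem hb (Ideal.mul_mem_left _ (C c) hg)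

/-- The ideal `(xy, 3y + x²)` of `ℂ[[x,y]]` consists exactly of the power series `a` with
`a(0,0) = 0` whose intersection multiplicity with `3y + x² = 0` at the origin is at
least 3, i.e. the coefficients of `t⁰, t¹, t²` in `a(t, −t²/3)` (computed
coefficientwise) vanish. -/
theorem stmt_15 (a : MvPowerSeries (Fin 2) ℂ) :
    a ∈ Ideal.span {px * py, 3 * py + px ^ 2} ↔
      ((MvPowerSeries.constantCoeff (σ := Fin 2) (R := ℂ)) a = 0 ∧
        ∀ n < 3, ∑ p ∈ Finset.range (n + 1) ×ˢ Finset.range (n + 1),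
          MvPowerSeries.coeff (R := ℂ) (Finsupp.single 0 p.1 + Finsupp.single 1 p.2) a *
            (if p.1 + 2 * p.2 = n then (-(1 : ℂ) / 3) ^ p.2 else 0) = 0) := by
  change _ ↔ constantCoeff a = 0 ∧ ∀ n < 3, parabolaCoeff a n = 0
  rw [← orderThreeOnParabola_iff]
  exact ⟨orderThreeOnParabola_of_mem, mem_of_orderThreeOnParabola⟩

end
end
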